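/- arXiv:1605.03828 — 9 statements merged into one kernel-verified Lean document; each statement's English description precedes it below -/
import Mathlib

section
/- Let S be a finite nonempty set of states, r : S × S → [0,1], and for a function f : S → [0,1] define B(f)(s) = min over s' ∈ S of max(1 − r(s,s'), f(s')). Then for all f, g : S → [0,1] and all s ∈ S, min(B(f)(s), B(I∘(f,g))(s)) ≤ B(g)(s), where I∘(f,g)(s') = I(f(s'), g(s')) is the pointwise Gödel implication. Consequently the formula B_a φ ∧ B_a(φ → ψ) → B_a ψ has value 1 at every state (axiom K is EGL-valid). -/
/-- Gödel implication on [0,1]. -/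
noncomputable def GI (x y : ℝ) : ℝ := if x ≤ y then 1 else y

/-- Fuzzy belief operator on a finite nonempty state set. -/
noncomputable def Bel {S : Type*} [Fintype S] [Nonempty S]
    (r : S → S → ℝ) (f : S → ℝ) (s : S) : ℝ :=
  Finset.univ.inf' Finset.univ_nonempty fun s' => max (1 - r s s') (f s')

theorem axiomK_valid {S : Type*} [Fintype S] [Nonempty S]
    (r : S → S → ℝ) (hr : ∀ s s', r s s' ∈ Set.Icc (0:ℝ) 1)
    (f g : S → ℝ) (hf : ∀ s, f s ∈ Set.Icc (0:ℝ) 1) (hg : ∀ s, g s ∈ Set.Icc (0:ℝ) 1)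
    (s : S) :
    min (Bel r f s) (Bel r (fun s' => GI (f s') (g s')) s) ≤ Bel r g s ∧
    GI (min (Bel r f s) (Bel r (fun s' => GI (f s') (g s')) s)) (Bel r g s) = 1 := by
  have key : min (Bel r f s) (Bel r (fun s' => GI (f s') (g s')) s) ≤ Bel r g s := by
    simp only [Bel, Finset.le_inf'_iff]
    intro s' _
    have h1 : Bel r f s ≤ max (1 - r s s') (f s') :=
      Finset.inf'_le _ (Finset.mem_univ s')
    have h2 : Bel r (fun s' => GI (f s') (g s')) s ≤ max (1 - r s s') (GI (f s') (g s')) :=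
      Finset.inf'_le _ (Finset.mem_univ s')
    by_cases h : f s' ≤ g s'
    · calc min (Bel r f s) (Bel r (fun s' => GI (f s') (g s')) s)
          ≤ Bel r f s := min_le_left _ _
        _ ≤ max (1 - r s s') (f s') := h1
        _ ≤ max (1 - r s s') (g s') := max_le_max le_rfl h
    · calc min (Bel r f s) (Bel r (fun s' => GI (f s') (g s')) s)
          ≤ Bel r (fun s' => GI (f s') (g s')) s := min_le_right _ _
        _ ≤ max (1 - r s s') (GI (f s') (g s')) := h2
        _ = max (1 - r s s') (g s') := by rw [GI, if_neg h]
  exact ⟨key, by rw [GI, if_pos key]⟩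
end

section
/- With the belief operator B(f)(s) = inf_{s'∈S} max(1 − r(s,s'), f(s')) on a finite set of states S, for all f, g : S → [0,1] and s ∈ S: B(λs'. I(f(s'), g(s')))(s) ≤ I(B(f)(s), B(g)(s)), i.e., the formula B_a(φ → ψ) → (B_a φ → B_a ψ) is EGL-valid. -/
theorem axiomK_imp_form_valid {S : Type*} [Fintype S] [Nonempty S]
    (r : S → S → ℝ) (hr : ∀ s s', r s s' ∈ Set.Icc (0:ℝ) 1)
    (f g : S → ℝ) (hf : ∀ s, f s ∈ Set.Icc (0:ℝ) 1) (hg : ∀ s, g s ∈ Set.Icc (0:ℝ) 1)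
    (s : S) :
    Bel r (fun s' => GI (f s') (g s')) s ≤ GI (Bel r f s) (Bel r g s) := by
  unfold GI
  split_ifs with h
  · -- bound by 1
    obtain ⟨t⟩ := (inferInstance : Nonempty S)
    refine le_trans (Finset.inf'_le _ (Finset.mem_univ t)) ?_
    simp only
    apply max_le
    · linarith [(hr s t).1]
    · split_ifs with h'
      · exact le_refl 1
      · exact (hg t).2
  · push_neg at h
    -- pick minimizer of Bel r g s
    obtain ⟨t, _, ht⟩ := Finset.exists_mem_eq_inf' (Finset.univ_nonempty (α := S))
      (fun s' => max (1 - r s s') (g s'))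
    have hC : Bel r g s = max (1 - r s t) (g t) := ht
    have h1 : 1 - r s t ≤ Bel r g s := hC ▸ le_max_left _ _
    have h2 : g t ≤ Bel r g s := hC ▸ le_max_right _ _
    have hA : Bel r f s ≤ max (1 - r s t) (f t) :=
      Finset.inf'_le _ (Finset.mem_univ t)
    have hft : Bel r g s < f t := by
      rcases max_cases (1 - r s t) (f t) with ⟨he, _⟩ | ⟨he, _⟩ <;> rw [he] at hA <;> linarith
    refine le_trans (Finset.inf'_le _ (Finset.mem_univ t)) ?_
    simp only
    have : ¬ f t ≤ g t := by linarith
    rw [if_neg this]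
    exact hC.ge
end

section
/- Axiom A3 is EGL-valid: for any finite nonempty set S, r : S × S → [0,1], f : S → [0,1], and s ∈ S, N(N(B(λs'. N(N(f(s'))))(s))) ≤ N(N(B(f)(s))), where N is Gödel negation and B the fuzzy belief operator; hence ¬¬B_a¬¬φ → ¬¬B_aφ has value 1. -/
/-- Gödel negation on [0,1]. -/
noncomputable def GN (x : ℝ) : ℝ := if x = 0 then 1 else 0

lemma GN_nonneg (x : ℝ) : 0 ≤ GN x := by
  unfold GN; split <;> norm_num

lemma GN_le_one (x : ℝ) : GN x ≤ 1 := by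
  unfold GN; split <;> norm_num

theorem axiomA3_valid {S : Type*} [Fintype S] [Nonempty S]
    (r : S → S → ℝ) (hr : ∀ s s', r s s' ∈ Set.Icc (0:ℝ) 1)
    (f : S → ℝ) (hf : ∀ s, f s ∈ Set.Icc (0:ℝ) 1) (s : S) :
    GN (GN (Bel r (fun s' => GN (GN (f s'))) s)) ≤ GN (GN (Bel r f s)) := by
  by_cases hb : Bel r f s = 0
  · -- then Bel of GNGN f is also 0, so LHS = 0
    obtain ⟨s', -, hs'⟩ := Finset.exists_mem_eq_inf' (Finset.univ_nonempty)
      (fun s' => max (1 - r s s') (f s'))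
    have hs0 : max (1 - r s s') (f s') = 0 := by rw [← hs']; exact hb
    have hf0 : f s' = 0 := le_antisymm (le_trans (le_max_right _ _) hs0.le) (hf s').1
    have hr0 : 1 - r s s' ≤ 0 := le_trans (le_max_left _ _) hs0.le
    have hB0 : Bel r (fun s' => GN (GN (f s'))) s = 0 := by
      refine le_antisymm ?_ ?_
      · calc Bel r (fun s' => GN (GN (f s'))) s
            ≤ max (1 - r s s') (GN (GN (f s'))) :=
              Finset.inf'_le _ (Finset.mem_univ s')
          _ = 0 := by simp [hf0, GN]; linarith
      · exact Finset.le_inf' _ _ fun b _ => le_max_of_le_right (GN_nonneg _)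
    rw [hB0]
    unfold GN
    norm_num
    split <;> norm_num
  · have : GN (Bel r f s) = 0 := by simp [GN, hb]
    rw [this]
    simp only [GN, if_pos rfl]
    exact GN_le_one _
end

section
/- Positive introspection fails in EGL: there exists a finite EGL-model (S, r, π) with S the 9 states {0, 0.5, 1}², accessibility r_b((x,y),(x',y')) = 1 if x = x', 0.81 if |x−x'| = 0.5, 0.72 if |x−x'| = 1, and valuation V(s)(m_a) = first coordinate of s, such that at state (1,1), B_b(m_a) = 0.28 while B_b(B_b(m_a)) = 0.19; hence the Gödel value of B_b m_a → B_b B_b m_a at (1,1) is 0.19 < 1. -/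
/-- The three mud-values 0, 0.5, 1. -/
noncomputable def mud : Fin 3 → ℝ := ![0, 0.5, 1]

/-- Agent b's indistinguishing function on states (x,y) ∈ {0,0.5,1}²,
depending on the difference of the first coordinates. -/
noncomputable def rb (s t : Fin 3 × Fin 3) : ℝ :=
  if mud s.1 = mud t.1 then 1
  else if |mud s.1 - mud t.1| = 0.5 then 0.81
  else 0.72

/-- The atomic proposition m_a: value of the first coordinate. -/
noncomputable def ma (s : Fin 3 × Fin 3) : ℝ := mud s.1

/-!
Everything depends only on first coordinates. Seen from first coordinate 1, agent b's doubt
`1 - r_b` about the columns 0, 0.5, 1 is 0.28, 0.19, 0, and from 0.5 it is 0.19, 0, 0.19.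
Hence `B_b m_a` is 0, 0.19, 0.28 on the three columns, each value being the doubt about the
column where `m_a` is false. At (1,1) the middle column then gives
`B_b B_b m_a ≤ max 0.19 0.19 = 0.19 < 0.28 = B_b m_a`: belief in `m_a` is not believed.
-/

theorem gi_of_lt {x y : ℝ} (h : y < x) : GI x y = y := if_neg h.not_ge

section Belief

variable {S : Type*} [Fintype S] [Nonempty S] {r : S → S → ℝ} {f : S → ℝ} {s : S} {c : ℝ}

theorem bel_le (t : S) : Bel r f s ≤ max (1 - r s t) (f t) :=
  Finset.inf'_le _ (Finset.mem_univ t)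

theorem le_bel (h : ∀ t, c ≤ max (1 - r s t) (f t)) : c ≤ Bel r f s :=
  Finset.le_inf' _ _ fun t _ => h t

theorem bel_eq_of_forall_le (t₀ : S) (h₀ : max (1 - r s t₀) (f t₀) = c)
    (h : ∀ t, c ≤ max (1 - r s t) (f t)) : Bel r f s = c :=
  le_antisymm (h₀ ▸ bel_le t₀) (le_bel h)

end Belief

theorem one_sub_rb (s t : Fin 3 × Fin 3) :
    1 - rb s t = !![0, 0.19, 0.28; 0.19, 0, 0.19; 0.28, 0.19, 0] s.1 t.1 := by
  rcases s with ⟨a, -⟩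
  rcases t with ⟨c, -⟩
  fin_cases a <;> fin_cases c <;> norm_num [rb, mud, abs]

theorem bel_rb_ma (s : Fin 3 × Fin 3) : Bel rb ma s = ![0, 0.19, 0.28] s.1 := by
  rcases s with ⟨a, -⟩
  refine bel_eq_of_forall_le (0, 0) ?_ fun ⟨c, _⟩ => ?_
  · fin_cases a <;> norm_num [one_sub_rb, ma, mud]
  · fin_cases a <;> fin_cases c <;> norm_num [one_sub_rb, ma, mud]

theorem bel_rb_bel_rb_ma : Bel rb (Bel rb ma) (2, 2) = 0.19 := by
  refine bel_eq_of_forall_le (1, 0) ?_ fun ⟨c, _⟩ => ?_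
  · norm_num [one_sub_rb, bel_rb_ma, Matrix.cons_val_two]
  · fin_cases c <;> norm_num [one_sub_rb, bel_rb_ma, Matrix.cons_val_two]

theorem positive_introspection_fails :
    Bel rb ma (2, 2) = 0.28 ∧
    Bel rb (Bel rb ma) (2, 2) = 0.19 ∧
    GI (Bel rb ma (2, 2)) (Bel rb (Bel rb ma) (2, 2)) = 0.19 ∧
    GI (Bel rb ma (2, 2)) (Bel rb (Bel rb ma) (2, 2)) < 1 := by
  have hB : Bel rb ma (2, 2) = 0.28 := by simp [bel_rb_ma]
  have hGI : GI (Bel rb ma (2, 2)) (Bel rb (Bel rb ma) (2, 2)) = 0.19 := by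
    rw [hB, bel_rb_bel_rb_ma]
    exact gi_of_lt (by norm_num)
  exact ⟨hB, bel_rb_bel_rb_ma, hGI, by rw [hGI]; norm_num⟩
end

section
/- Negative introspection fails in EGL: in the fuzzy muddy children model with S = {0,0.5,1}², r_a((x,y),(x',y')) = 1 if y=y', 0.36 if |y−y'|=0.5, 0.32 if |y−y'|=1, and V((x,y))(m_b) = y, the Gödel value of ¬B_a m_b → B_a(¬B_a m_b) at state (0.5, 0) equals 0.64, hence is not 1. -/
/-- Agent a's indistinguishing function on states (x,y) ∈ {0,0.5,1}²,
depending on the difference of the second coordinates. -/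
noncomputable def ra (s t : Fin 3 × Fin 3) : ℝ :=
  if mud s.2 = mud t.2 then 1
  else if |mud s.2 - mud t.2| = 0.5 then 0.36
  else 0.32

/-- The atomic proposition m_b: value of the second coordinate. -/
noncomputable def mb (s : Fin 3 × Fin 3) : ℝ := mud s.2

/-!
Belief in `m_b` is `0` at the states with `y = 0` and positive elsewhere, since from `y ≠ 0` every
world with `m_b = 0` is at most `0.36`-plausible; so `¬B_a m_b` is crisp, true exactly where
`y = 0`. From `(0.5, 0)` the worlds with `y = 0.5` refute it with plausibility `0.36`, so
`B_a (¬B_a m_b)` has value `1 - 0.36 = 0.64`, below the value `1` of `¬B_a m_b`.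
-/

theorem Bel_eq_of_isLeast {S : Type*} [Fintype S] [Nonempty S] {r : S → S → ℝ} {f : S → ℝ}
    {s : S} {c : ℝ} (h : IsLeast (Set.range fun s' => max (1 - r s s') (f s')) c) :
    Bel r f s = c := by
  obtain ⟨⟨t, rfl⟩, hle⟩ := h
  exact le_antisymm (Finset.inf'_le _ (Finset.mem_univ t))
    (Finset.le_inf' _ _ fun s' _ => hle ⟨s', rfl⟩)

theorem Bel_ra_mb_mk_zero (x : Fin 3) : Bel ra mb (x, 0) = 0 := by
  refine Bel_eq_of_isLeast ⟨⟨(x, 0), by norm_num [ra, mb, mud]⟩, ?_⟩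
  rintro _ ⟨t, rfl⟩
  exact le_max_of_le_right (by fin_cases t <;> norm_num [mb, mud])

theorem Bel_ra_mb_pos (x : Fin 3) {y : Fin 3} (hy : y ≠ 0) : 0 < Bel ra mb (x, y) := by
  refine (Finset.lt_inf'_iff _).2 fun ⟨x', y'⟩ _ => ?_
  fin_cases y
  · exact absurd rfl hy
  all_goals fin_cases y' <;> norm_num [ra, mb, mud, abs]

theorem GN_Bel_ra_mb (t : Fin 3 × Fin 3) : GN (Bel ra mb t) = if t.2 = 0 then 1 else 0 := by
  obtain ⟨x, y⟩ := t
  by_cases hy : y = 0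
  · simp [hy, Bel_ra_mb_mk_zero, GN]
  · simp [hy, GN, (Bel_ra_mb_pos x hy).ne']

theorem Bel_ra_GN_Bel_ra_mb : Bel ra (fun t => GN (Bel ra mb t)) (1, 0) = 0.64 := by
  simp only [GN_Bel_ra_mb]
  refine Bel_eq_of_isLeast ⟨⟨(0, 1), by norm_num [ra, mud]⟩, ?_⟩
  rintro _ ⟨⟨x, y⟩, rfl⟩
  fin_cases y <;> norm_num [ra, mud, abs]

theorem negative_introspection_fails :
    GI (GN (Bel ra mb (1, 0)))
       (Bel ra (fun s' => GN (Bel ra mb s')) (1, 0)) = 0.64 ∧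
    GI (GN (Bel ra mb (1, 0)))
       (Bel ra (fun s' => GN (Bel ra mb s')) (1, 0)) ≠ 1 := by
  rw [Bel_ra_GN_Bel_ra_mb, Bel_ra_mb_mk_zero]
  norm_num [GN, GI]
end

section
/- K-axiom for iterated group knowledge: for every n ∈ ℕ, every finite nonempty state set S with agent relations r_a and finite group G, and all f, g : S → [0,1], min(Eⁿ(λs. I(f(s), g(s)))(s₀), Eⁿ(f)(s₀)) ≤ Eⁿ(g)(s₀) for all s₀ ∈ S, where Eⁿ denotes the n-fold iterate of the group-knowledge operator E. -/
/-- The "everybody knows" operator over a finite nonempty group G of agents. -/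
noncomputable def EOp {S A : Type*} [Fintype S] [Nonempty S]
    (r : A → S → S → ℝ) (G : Finset A) (hG : G.Nonempty)
    (f : S → ℝ) (s : S) : ℝ :=
  G.inf' hG fun a => Bel (r a) f s

/-- Common knowledge: infimum of all iterates Eⁱ for i ≥ 1. -/
noncomputable def COp {S A : Type*} [Fintype S] [Nonempty S]
    (r : A → S → S → ℝ) (G : Finset A) (hG : G.Nonempty)
    (f : S → ℝ) (s : S) : ℝ :=
  ⨅ i : ℕ, (EOp r G hG)^[i + 1] f s


lemma bel_K {S : Type*} [Fintype S] [Nonempty S] (r : S → S → ℝ) {u v w : S → ℝ}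
    (h : ∀ s, min (u s) (v s) ≤ w s) (s : S) :
    min (Bel r u s) (Bel r v s) ≤ Bel r w s := by
  apply Finset.le_inf'
  intro s' _
  calc min (Bel r u s) (Bel r v s)
      ≤ min (max (1 - r s s') (u s')) (max (1 - r s s') (v s')) := by
        apply min_le_min <;> exact Finset.inf'_le _ (Finset.mem_univ s')
    _ = max (1 - r s s') (min (u s') (v s')) := (max_min_distrib_left ..).symm
    _ ≤ max (1 - r s s') (w s') := max_le_max le_rfl (h s')

lemma eop_K {S A : Type*} [Fintype S] [Nonempty S]
    (r : A → S → S → ℝ) (G : Finset A) (hG : G.Nonempty) {u v w : S → ℝ}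
    (h : ∀ s, min (u s) (v s) ≤ w s) (s : S) :
    min (EOp r G hG u s) (EOp r G hG v s) ≤ EOp r G hG w s := by
  apply Finset.le_inf'
  intro a ha
  calc min (EOp r G hG u s) (EOp r G hG v s)
      ≤ min (Bel (r a) u s) (Bel (r a) v s) := by
        apply min_le_min <;> exact Finset.inf'_le _ ha
    _ ≤ Bel (r a) w s := bel_K _ h s

theorem iterated_groupKnowledge_K {S A : Type*} [Fintype S] [Nonempty S]
    (r : A → S → S → ℝ) (hr : ∀ a s s', r a s s' ∈ Set.Icc (0:ℝ) 1)
    (G : Finset A) (hG : G.Nonempty)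
    (f g : S → ℝ) (hf : ∀ s, f s ∈ Set.Icc (0:ℝ) 1) (hg : ∀ s, g s ∈ Set.Icc (0:ℝ) 1)
    (n : ℕ) (s₀ : S) :
    min ((EOp r G hG)^[n] (fun s => GI (f s) (g s)) s₀) ((EOp r G hG)^[n] f s₀)
      ≤ (EOp r G hG)^[n] g s₀ := by
  induction n generalizing s₀ with
  | zero =>
    simp only [Function.iterate_zero, id_eq, GI]
    split
    · exact le_trans (min_le_right _ _) ‹f s₀ ≤ g s₀›
    · exact min_le_left _ _
  | succ n ih =>
    simp only [Function.iterate_succ_apply']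
    exact eop_K r G hG (fun s => ih s) s₀
end

section
/- Common knowledge K-axiom: define C(f)(s) = inf over i ≥ 1 of Eⁱ(f)(s), where E is the group-knowledge operator over a finite nonempty group. Then for all f, g : S → [0,1] and s ∈ S, min(C(λs'. I(f(s'), g(s')))(s), C(f)(s)) ≤ C(g)(s), so C_B(φ→ψ) ∧ C_B φ → C_B ψ is valid. -/
section Aux

variable {S A : Type*} [Fintype S] [Nonempty S]

lemma Bel_mono (r : S → S → ℝ) {f g : S → ℝ} (h : ∀ s, f s ≤ g s) (s : S) :
    Bel r f s ≤ Bel r g s := by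
  apply Finset.le_inf'
  intro s' _
  exact le_trans (Finset.inf'_le _ (Finset.mem_univ s')) (max_le_max le_rfl (h s'))

lemma EOp_mono (r : A → S → S → ℝ) (G : Finset A) (hG : G.Nonempty)
    {f g : S → ℝ} (h : ∀ s, f s ≤ g s) (s : S) :
    EOp r G hG f s ≤ EOp r G hG g s := by
  apply Finset.le_inf'
  intro a ha
  exact le_trans (Finset.inf'_le _ ha) (Bel_mono (r a) h s)

lemma iter_mono (r : A → S → S → ℝ) (G : Finset A) (hG : G.Nonempty) :
    ∀ (i : ℕ) {f g : S → ℝ}, (∀ s, f s ≤ g s) → ∀ s,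
      (EOp r G hG)^[i] f s ≤ (EOp r G hG)^[i] g s := by
  intro i
  induction i with
  | zero => intro f g h s; simpa using h s
  | succ n ih =>
    intro f g h s
    rw [Function.iterate_succ_apply', Function.iterate_succ_apply']
    exact EOp_mono r G hG (fun s' => ih h s') s

lemma min_Bel_le (r : S → S → ℝ) (u v : S → ℝ) (s : S) :
    min (Bel r u s) (Bel r v s) ≤ Bel r (fun s' => min (u s') (v s')) s := by
  apply Finset.le_inf'
  intro s' _
  show min (Bel r u s) (Bel r v s) ≤ max (1 - r s s') (min (u s') (v s'))
  rcases le_total (u s') (v s') with h | h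
  · rw [min_eq_left h]
    exact le_trans (min_le_left _ _) (Finset.inf'_le _ (Finset.mem_univ s'))
  · rw [min_eq_right h]
    exact le_trans (min_le_right _ _) (Finset.inf'_le _ (Finset.mem_univ s'))

lemma min_EOp_le (r : A → S → S → ℝ) (G : Finset A) (hG : G.Nonempty)
    (u v : S → ℝ) (s : S) :
    min (EOp r G hG u s) (EOp r G hG v s)
      ≤ EOp r G hG (fun s' => min (u s') (v s')) s := by
  apply Finset.le_inf'
  intro a ha
  exact le_trans (min_le_min (Finset.inf'_le _ ha) (Finset.inf'_le _ ha))
    (min_Bel_le (r a) u v s)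

lemma min_iter_le (r : A → S → S → ℝ) (G : Finset A) (hG : G.Nonempty)
    (u v : S → ℝ) : ∀ (i : ℕ) (s : S),
    min ((EOp r G hG)^[i] u s) ((EOp r G hG)^[i] v s)
      ≤ (EOp r G hG)^[i] (fun s' => min (u s') (v s')) s := by
  intro i
  induction i with
  | zero => intro s; simp
  | succ n ih =>
    intro s
    rw [Function.iterate_succ_apply', Function.iterate_succ_apply',
      Function.iterate_succ_apply']
    exact le_trans (min_EOp_le r G hG _ _ s) (EOp_mono r G hG ih s)

lemma min_GI_le (x y : ℝ) : min (GI x y) x ≤ y := by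
  unfold GI
  split
  · exact le_trans (min_le_right _ _) ‹x ≤ y›
  · exact min_le_left _ _

lemma Bel_nonneg (r : S → S → ℝ) (hr : ∀ s s', r s s' ≤ 1) (f : S → ℝ) (s : S) :
    0 ≤ Bel r f s := by
  apply Finset.le_inf'
  intro s' _
  exact le_trans (by linarith [hr s s']) (le_max_left _ _)

lemma EOp_nonneg (r : A → S → S → ℝ) (hr : ∀ a s s', r a s s' ≤ 1)
    (G : Finset A) (hG : G.Nonempty) (f : S → ℝ) (s : S) :
    0 ≤ EOp r G hG f s := by
  apply Finset.le_inf'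
  intro a _
  exact Bel_nonneg (r a) (hr a) f s

end Aux

theorem commonKnowledge_K {S A : Type*} [Fintype S] [Nonempty S]
    (r : A → S → S → ℝ) (hr : ∀ a s s', r a s s' ∈ Set.Icc (0:ℝ) 1)
    (G : Finset A) (hG : G.Nonempty)
    (f g : S → ℝ) (hf : ∀ s, f s ∈ Set.Icc (0:ℝ) 1) (hg : ∀ s, g s ∈ Set.Icc (0:ℝ) 1)
    (s : S) :
    min (COp r G hG (fun s' => GI (f s') (g s')) s) (COp r G hG f s)
      ≤ COp r G hG g s := by
  have hr1 : ∀ a s s', r a s s' ≤ 1 := fun a s s' => (hr a s s').2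
  have hnn : ∀ (u : S → ℝ) (i : ℕ), 0 ≤ (EOp r G hG)^[i + 1] u s := by
    intro u i
    rw [Function.iterate_succ_apply']
    exact EOp_nonneg r hr1 G hG _ s
  have key : ∀ i : ℕ,
      min ((EOp r G hG)^[i+1] (fun s' => GI (f s') (g s')) s)
        ((EOp r G hG)^[i+1] f s) ≤ (EOp r G hG)^[i+1] g s := by
    intro i
    refine le_trans (min_iter_le r G hG _ _ (i+1) s) ?_
    exact iter_mono r G hG (i+1) (fun s' => min_GI_le (f s') (g s')) s
  apply le_ciInf
  intro i
  refine le_trans (min_le_min (ciInf_le ⟨0, ?_⟩ i) (ciInf_le ⟨0, ?_⟩ i)) (key i)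
  · rintro x ⟨j, rfl⟩; exact hnn _ j
  · rintro x ⟨j, rfl⟩; exact hnn _ j
end

section
/- Dynamic belief reduction (one direction): let M = (S, r_a, V) be a DEGL-model and A = (E, u_a, pre) an action model with u_a(e,e) = 1. Let S' = {(s,e) : V_s(pre_e) = 1} and r'_a((s₁,e₁),(s₂,e₂)) = min(r_a(s₁,s₂), u_a(e₁,e₂)). For f' : S' → [0,1] define U_e(f')(s) = f'(s,e) if (s,e) ∈ S' and 1 otherwise. Then for every e and every s with V_s(pre_e) = 1: B'(f')(s,e) ≤ B_a(U_e(f'))(s), where B' uses r' on S' and B_a uses r_a on S. This establishes validity of [A,e]B_a φ → (pre_e → B_a[A,e]φ). -/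
theorem dynamic_reduction_forward {S Ev : Type*}
    [Fintype S] [Nonempty S] [Fintype Ev] [Nonempty Ev]
    (r : S → S → ℝ) (hr : ∀ s s', r s s' ∈ Set.Icc (0:ℝ) 1)
    (u : Ev → Ev → ℝ) (hu01 : ∀ e e', u e e' ∈ Set.Icc (0:ℝ) 1)
    (hu : ∀ e, u e e = 1)
    (preV : S → Ev → ℝ)
    (f' : S × Ev → ℝ) (hf' : ∀ x, f' x ∈ Set.Icc (0:ℝ) 1)
    (e : Ev) (s : S) (hs : preV s e = 1) :
    -- B'(f')(s,e) in the product model ≤ B_a(U_e f')(s) in the original model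
    (⨅ x' : {p : S × Ev // preV p.1 p.2 = 1},
        max (1 - min (r s x'.1.1) (u e x'.1.2)) (f' x'.1))
      ≤ ⨅ s' : S, max (1 - r s s') (if preV s' e = 1 then f' (s', e) else 1) := by
  haveI : Nonempty {p : S × Ev // preV p.1 p.2 = 1} := ⟨⟨(s, e), hs⟩⟩
  have hbdd : BddBelow (Set.range fun x' : {p : S × Ev // preV p.1 p.2 = 1} =>
      max (1 - min (r s x'.1.1) (u e x'.1.2)) (f' x'.1)) :=
    (Set.finite_range _).bddBelow
  apply le_ciInf
  intro s'
  by_cases h : preV s' e = 1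
  · have := ciInf_le hbdd ⟨(s', e), h⟩
    refine this.trans_eq ?_
    simp [h, min_eq_left (hr s s').2, hu]
  · have := ciInf_le hbdd ⟨(s, e), hs⟩
    refine this.trans ?_
    simp only [h, if_false]
    have h1 : max (1 - min (r s s) (u e e)) (f' (s, e)) ≤ 1 := by
      apply max_le
      · linarith [(hr s s).1, (hu01 e e).1, le_min (hr s s).1 (hu01 e e).1]
      · exact (hf' (s, e)).2
    exact h1.trans (le_max_right _ _)
end

section
/- Dynamic belief reduction (other direction): with M, A, product model M × A as above, for every action e and every state s, min over {e' ∈ E : u_a(e,e') ≠ 0} of B_a(U_{e'}(f'))(s) ≤ V_s([A,e] B-value), i.e., if V_s(pre_e) = 1 then this minimum is ≤ B'(f')(s,e), and if V_s(pre_e) = 0 the right side is 1. Hence ⋀_{e': u_a(e,e')≠0} B_a[A,e']φ → [A,e]B_a φ is valid. -/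
theorem dynamic_reduction_backward {S Ev : Type*}
    [Fintype S] [Nonempty S] [Fintype Ev] [Nonempty Ev]
    (r : S → S → ℝ) (hr : ∀ s s', r s s' ∈ Set.Icc (0:ℝ) 1)
    (u : Ev → Ev → ℝ) (hu01 : ∀ e e', u e e' ∈ Set.Icc (0:ℝ) 1)
    (hu : ∀ e, u e e = 1)
    (preV : S → Ev → ℝ)
    (f' : S × Ev → ℝ) (hf' : ∀ x, f' x ∈ Set.Icc (0:ℝ) 1)
    (e : Ev) (s : S) :
    -- min over e' with u(e,e') ≠ 0 of B_a(U_{e'} f')(s) ≤ value of [A,e]B_a φ at s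
    (⨅ e' : {e' : Ev // u e e' ≠ 0}, ⨅ s' : S,
        max (1 - r s s') (if preV s' e'.1 = 1 then f' (s', e'.1) else 1))
      ≤ (if preV s e = 1 then
          (⨅ x' : {p : S × Ev // preV p.1 p.2 = 1},
            max (1 - min (r s x'.1.1) (u e x'.1.2)) (f' x'.1))
        else 1) := by
  set T : {e' : Ev // u e e' ≠ 0} → S → ℝ := fun e' s' =>
    max (1 - r s s') (if preV s' e'.1 = 1 then f' (s', e'.1) else 1) with hT
  have hT0 : ∀ e' s', (0:ℝ) ≤ T e' s' := by
    intro e' s'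
    exact le_trans (by linarith [(hr s s').2]) (le_max_left _ _)
  have hT1 : ∀ e' s', T e' s' ≤ 1 := by
    intro e' s'
    apply max_le (by linarith [(hr s s').1])
    split
    · exact (hf' _).2
    · exact le_refl 1
  have hbbi : ∀ e', BddBelow (Set.range (T e')) :=
    fun e' => ⟨0, by rintro x ⟨s', rfl⟩; exact hT0 e' s'⟩
  have hg0 : ∀ e', (0:ℝ) ≤ ⨅ s', T e' s' := fun e' => le_ciInf (hT0 e')
  have hbbo : BddBelow (Set.range fun e' => ⨅ s', T e' s') :=
    ⟨0, by rintro x ⟨e', rfl⟩; exact hg0 e'⟩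
  have hee : u e e ≠ 0 := by rw [hu]; norm_num
  have hle1 : (⨅ e', ⨅ s', T e' s') ≤ 1 := by
    refine le_trans (ciInf_le hbbo ⟨e, hee⟩) ?_
    refine le_trans (ciInf_le (hbbi _) (Classical.arbitrary S)) (hT1 _ _)
  split
  · next hpre =>
    haveI : Nonempty {p : S × Ev // preV p.1 p.2 = 1} := ⟨⟨(s, e), hpre⟩⟩
    refine le_ciInf ?_
    rintro ⟨⟨s', e'⟩, hpre'⟩
    by_cases hu0 : u e e' = 0
    · have : min (r s s') (u e e') = 0 := by
        rw [hu0]; exact min_eq_right (hr s s').1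
      rw [this]
      simp only [sub_zero]
      exact le_trans hle1 (le_max_left _ _)
    · refine le_trans (ciInf_le hbbo ⟨e', hu0⟩) ?_
      refine le_trans (ciInf_le (hbbi _) s') ?_
      simp only [hT, hpre', if_pos]
      exact max_le_max (sub_le_sub_left (min_le_left _ _) 1) le_rfl
  · exact hle1
end
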